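/- For N = 2 levels with dim E_1 = n_1 ≥ dim E_2 = n_2 ≥ 2, the orthogonal complement V = {φ_{0_1}, Z_1^* φ_{0_2}, |0_2⟩, φ_{0_2}}^⊥ within E_1 ⊕ E_2 equals span{φ_{a_1} − φ_{(a+1)_1}, φ_{a_2} − φ_{(a+1)_2} : 1 ≤ a ≤ n_2 − 2} ⊕ W, where W = span{φ_{a_1} : n_2 ≤ a ≤ n_1 − 1}. -/

import Mathlib

noncomputable section

/-- The rank-one operator `|u⟩⟨v|`. -/
noncomputable def outer {E F : Type*} [NormedAddCommGroup E] [InnerProductSpace ℂ E]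
    [NormedAddCommGroup F] [InnerProductSpace ℂ F] (u : F) (v : E) : E →ₗ[ℂ] F where
  toFun x := (inner ℂ v x : ℂ) • u
  map_add' x y := by simp [inner_add_right, add_smul]
  map_smul' c x := by simp [inner_smul_right, smul_smul]

local notation "⟪" x ", " y "⟫" => @inner ℂ _ _ x y

lemma outer_apply' {E F : Type*} [NormedAddCommGroup E] [InnerProductSpace ℂ E]
    [NormedAddCommGroup F] [InnerProductSpace ℂ F] (u : F) (v : E) (x : E) :
    outer u v x = (inner ℂ v x : ℂ) • u := rfl

lemma adjoint_outer' {E F : Type*} [NormedAddCommGroup E] [InnerProductSpace ℂ E]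
    [NormedAddCommGroup F] [InnerProductSpace ℂ F] [FiniteDimensional ℂ E]
    [FiniteDimensional ℂ F] (u : F) (v : E) :
    LinearMap.adjoint (outer u v) = outer v u := by
  apply LinearMap.ext; intro x
  apply ext_inner_left ℂ; intro y
  rw [LinearMap.adjoint_inner_right, outer_apply', outer_apply', inner_smul_left,
    inner_smul_right, inner_conj_symm]
  ring

lemma zeta_ne_zero' (n : ℕ) : Complex.exp (2 * Real.pi * Complex.I / n) ≠ 0 :=
  Complex.exp_ne_zero _

lemma zeta_sum' (n : ℕ) (hn : 0 < n) (k : ℤ) :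
    ∑ b : Fin n, (Complex.exp (2 * Real.pi * Complex.I / n)) ^ (k * b.1) =
      if (n : ℤ) ∣ k then (n : ℂ) else 0 := by
  set ζ := Complex.exp (2 * Real.pi * Complex.I / n) with hζ
  have hprim : IsPrimitiveRoot ζ n := Complex.isPrimitiveRoot_exp n hn.ne'
  have hzn : ζ ^ (n : ℤ) = 1 := by rw [hprim.zpow_eq_one_iff_dvd]
  have key : ∀ b : Fin n, ζ ^ (k * b.1) = (ζ ^ k) ^ b.1 := by
    intro b; rw [zpow_mul, zpow_natCast]
  simp_rw [key]
  rw [Fin.sum_univ_eq_sum_range (fun i => (ζ ^ k) ^ i) n]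
  by_cases hdvd : (n : ℤ) ∣ k
  · rw [if_pos hdvd]
    have : ζ ^ k = 1 := (hprim.zpow_eq_one_iff_dvd k).2 hdvd
    simp [this]
  · rw [if_neg hdvd]
    have hne : ζ ^ k ≠ 1 := fun h => hdvd ((hprim.zpow_eq_one_iff_dvd k).1 h)
    rw [geom_sum_eq hne]
    have : (ζ ^ k) ^ n = 1 := by
      rw [← zpow_natCast (ζ ^ k) n, ← zpow_mul, mul_comm, zpow_mul, hzn, one_zpow]
    rw [this]; simp

lemma zeta_conj' (n : ℕ) :
    (starRingEnd ℂ) (Complex.exp (2 * Real.pi * Complex.I / n)) =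
      (Complex.exp (2 * Real.pi * Complex.I / n))⁻¹ := by
  rw [← Complex.exp_conj, ← Complex.exp_neg]
  congr 1
  simp [map_div₀, Complex.conj_I, map_ofNat]
  ring

lemma zeta_conj_zpow' (n : ℕ) (m : ℤ) :
    (starRingEnd ℂ) ((Complex.exp (2 * Real.pi * Complex.I / n)) ^ m) =
      (Complex.exp (2 * Real.pi * Complex.I / n)) ^ (-m) := by
  rw [map_zpow₀, zeta_conj', inv_zpow, ← zpow_neg]

lemma fin_eq_of_dvd' {n : ℕ} (a a' : Fin n) (h : (n : ℤ) ∣ ((a.1 : ℤ) - a'.1)) : a = a' := by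
  have ha := a.2; have ha' := a'.2
  have := Int.eq_zero_of_abs_lt_dvd h (by rw [abs_lt]; omega)
  exact Fin.ext (by omega)

lemma sqrt_mul_self_complex' (n : ℕ) :
    ((Real.sqrt n : ℝ) : ℂ) * ((Real.sqrt n : ℝ) : ℂ) = (n : ℂ) := by
  norm_cast
  exact Real.mul_self_sqrt (Nat.cast_nonneg n)

lemma inv_sqrt_sq' (n : ℕ) (hn : 0 < n) :
    ((Real.sqrt n : ℂ))⁻¹ * (((Real.sqrt n : ℂ))⁻¹ * (n : ℂ)) = 1 := by
  rw [← mul_assoc, ← mul_inv, sqrt_mul_self_complex',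
    inv_mul_cancel₀ (by exact_mod_cast hn.ne' : (n : ℂ) ≠ 0)]

lemma sqrt_ne_zero_complex' {n : ℕ} (hn : 0 < n) : ((Real.sqrt n : ℝ) : ℂ) ≠ 0 := by
  simp only [ne_eq, Complex.ofReal_eq_zero]
  positivity

section Fourier
variable {H : Type*} [NormedAddCommGroup H] [InnerProductSpace ℂ H]
variable {n : ℕ} (hn : 0 < n) (e : Fin n → H) (he : Orthonormal ℂ e) (φ : Fin n → H)
variable (hφ : ∀ a : Fin n, φ a = ((Real.sqrt n : ℂ))⁻¹ • ∑ b : Fin n,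
      (Complex.exp (2 * Real.pi * Complex.I / n)) ^ (-((a.1 * b.1 : ℕ) : ℤ)) • e b)

include hn he hφ in
lemma fourier_inner' : ∀ a a' : Fin n, ⟪φ a, φ a'⟫ = if a = a' then (1:ℂ) else 0 := by
  intro a a'
  set ζ := Complex.exp (2 * Real.pi * Complex.I / n) with hζ
  have hite := orthonormal_iff_ite.mp he
  rw [hφ a, hφ a', inner_smul_left, inner_smul_right, sum_inner]
  simp_rw [inner_sum, inner_smul_left, inner_smul_right, hite, mul_ite, mul_one, mul_zero,
    Finset.sum_ite_eq, Finset.mem_univ, if_true]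
  have hterm : ∀ b : Fin n,
      (starRingEnd ℂ) (ζ ^ (-((a.1 * b.1 : ℕ) : ℤ))) * ζ ^ (-((a'.1 * b.1 : ℕ) : ℤ)) =
        ζ ^ (((a.1 : ℤ) - a'.1) * b.1) := by
    intro b
    rw [zeta_conj_zpow', neg_neg, ← zpow_add₀ (zeta_ne_zero' n)]
    congr 1; push_cast; ring
  simp_rw [hterm]
  rw [zeta_sum' n hn ((a.1 : ℤ) - a'.1)]
  rw [map_inv₀, Complex.conj_ofReal]
  by_cases haa : a = a'
  · rw [if_pos haa, if_pos (by rw [haa, sub_self]; exact dvd_zero _)]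
    exact inv_sqrt_sq' n hn
  · rw [if_neg haa, if_neg (fun h => haa (fin_eq_of_dvd' a a' h))]
    simp

include hn he hφ in
lemma fourier_inv' : ∀ b' : Fin n, e b' = ((Real.sqrt n : ℂ))⁻¹ • ∑ a : Fin n,
    (Complex.exp (2 * Real.pi * Complex.I / n)) ^ ((a.1 * b'.1 : ℕ) : ℤ) • φ a := by
  intro b'
  set ζ := Complex.exp (2 * Real.pi * Complex.I / n) with hζ
  set c : ℂ := ((Real.sqrt n : ℂ))⁻¹ with hc
  have : ∑ a : Fin n, ζ ^ ((a.1 * b'.1 : ℕ) : ℤ) • φ a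
      = c • ∑ b : Fin n, (∑ a : Fin n, ζ ^ (((b'.1 : ℤ) - b.1) * a.1)) • e b := by
    simp_rw [hφ, smul_smul, Finset.smul_sum, smul_smul]
    rw [Finset.sum_comm]
    refine Finset.sum_congr rfl fun b _ => ?_
    rw [Finset.mul_sum, Finset.sum_smul]
    refine Finset.sum_congr rfl fun a _ => ?_
    congr 1
    rw [mul_comm (ζ ^ _) c, mul_assoc]
    congr 1
    rw [← zpow_add₀ (zeta_ne_zero' n)]
    congr 1; push_cast; ring
  rw [this]
  have hz : ∀ b : Fin n, (∑ a : Fin n, ζ ^ (((b'.1 : ℤ) - b.1) * a.1))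
      = if b' = b then (n:ℂ) else 0 := by
    intro b
    rw [zeta_sum' n hn]
    by_cases hb : b' = b
    · rw [if_pos hb, if_pos (by rw [hb, sub_self]; exact dvd_zero _)]
    · rw [if_neg hb, if_neg (fun h => hb (fin_eq_of_dvd' b' b h))]
  simp_rw [hz, ite_smul, zero_smul, Finset.sum_ite_eq, Finset.mem_univ, if_true]
  rw [smul_smul, smul_smul, mul_assoc, hc, inv_sqrt_sq' n hn, one_smul]

include he hφ in
lemma fourier_inner_e' (c : Fin n) (a : Fin n) :
    ⟪e c, φ a⟫ = ((Real.sqrt n : ℂ))⁻¹ *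
      (Complex.exp (2 * Real.pi * Complex.I / n)) ^ (-((a.1 * c.1 : ℕ) : ℤ)) := by
  rw [hφ a, inner_smul_right, inner_sum]
  simp_rw [inner_smul_right, orthonormal_iff_ite.mp he, mul_ite, mul_one, mul_zero,
    Finset.sum_ite_eq, Finset.mem_univ, if_true]

end Fourier

lemma ladder' {H : Type*} [AddCommGroup H] [Module ℂ H] (J : Submodule ℂ H)
    (ψ : ℕ → H) (m : ℕ) (hm : 2 ≤ m) (h0 : ψ 0 ∈ J)
    (hsum : ∑ b ∈ Finset.range m, ψ b ∈ J)
    (hd : ∀ a, 1 ≤ a → a ≤ m - 2 → ψ a - ψ (a + 1) ∈ J) :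
    ∀ b, b < m → ψ b ∈ J := by
  have hdiff : ∀ j, 1 ≤ j → j < m → ψ 1 - ψ j ∈ J := by
    intro j h1 hj
    induction j with
    | zero => omega
    | succ k ih =>
      rcases Nat.lt_or_ge k 1 with hk | hk
      · have : k = 0 := by omega
        subst this
        simpa using J.zero_mem
      · have hkm : k < m := by omega
        have ha1 : ψ 1 - ψ k ∈ J := ih hk hkm
        have ha2 : ψ k - ψ (k + 1) ∈ J := hd k hk (by omega)
        have := J.add_mem ha1 ha2
        rwa [sub_add_sub_cancel] at this
  have hP : ∑ b ∈ Finset.Ico 1 m, ψ b ∈ J := by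
    have hsplit : ∑ b ∈ Finset.range m, ψ b = ψ 0 + ∑ b ∈ Finset.Ico 1 m, ψ b := by
      rw [Finset.range_eq_Ico, Finset.sum_eq_sum_Ico_succ_bot (by omega : 0 < m)]
    have := J.sub_mem hsum h0
    rwa [hsplit, add_sub_cancel_left] at this
  have hQ : ∑ j ∈ Finset.Ico 1 m, (ψ 1 - ψ j) ∈ J := by
    apply J.sum_mem
    intro j hj
    rw [Finset.mem_Ico] at hj
    exact hdiff j hj.1 hj.2
  have hsm : ((m - 1 : ℕ) : ℂ) • ψ 1 ∈ J := by
    have hEq : ∑ j ∈ Finset.Ico 1 m, (ψ 1 - ψ j)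
        = (m - 1) • ψ 1 - ∑ j ∈ Finset.Ico 1 m, ψ j := by
      rw [Finset.sum_sub_distrib, Finset.sum_const, Nat.card_Ico]
    have := J.add_mem hQ hP
    rw [hEq, sub_add_cancel] at this
    rwa [Nat.cast_smul_eq_nsmul]
  have hψ1 : ψ 1 ∈ J := by
    have hne : ((m - 1 : ℕ) : ℂ) ≠ 0 := by
      simp only [ne_eq, Nat.cast_eq_zero]; omega
    have := J.smul_mem (((m - 1 : ℕ) : ℂ))⁻¹ hsm
    rwa [smul_smul, inv_mul_cancel₀ hne, one_smul] at this
  intro b hb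
  rcases Nat.lt_or_ge b 1 with h | h
  · have : b = 0 := by omega
    subst this; exact h0
  · have : ψ 1 - (ψ 1 - ψ b) = ψ b := by abel
    rw [← this]
    exact J.sub_mem hψ1 (hdiff b h hb)

/-- AVK model, N = 2: Within `E_1 ⊕ E_2` (realized as the span of the
joint orthonormal basis `e1, e2` of `H`), the orthogonal complement
`V = {φ_{0_1}, Z_1^* φ_{0_2}, |0_2⟩, φ_{0_2}}ᗮ` equals
`span{φ_{a_1} − φ_{(a+1)_1}, φ_{a_2} − φ_{(a+1)_2} : 1 ≤ a ≤ n_2 − 2} ⊕ W`, where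
`W = span{φ_{a_1} : n_2 ≤ a ≤ n_1 − 1}`. -/
theorem stmt16 {H : Type*} [NormedAddCommGroup H] [InnerProductSpace ℂ H]
    [FiniteDimensional ℂ H]
    (n1 n2 : ℕ) (hn2 : 2 ≤ n2) (hle : n2 ≤ n1)
    (h1 : 0 < n1) (h2 : 0 < n2)
    (e1 : Fin n1 → H) (e2 : Fin n2 → H)
    (honb : Orthonormal ℂ (Sum.elim e1 e2 : Fin n1 ⊕ Fin n2 → H))
    (hspan : Submodule.span ℂ (Set.range (Sum.elim e1 e2 : Fin n1 ⊕ Fin n2 → H)) = ⊤)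
    (φ1 : Fin n1 → H) (φ2 : Fin n2 → H)
    (hφ1 : ∀ a : Fin n1, φ1 a = ((Real.sqrt n1 : ℂ))⁻¹ • ∑ b : Fin n1,
      (Complex.exp (2 * Real.pi * Complex.I / n1)) ^ (-((a.1 * b.1 : ℕ) : ℤ)) • e1 b)
    (hφ2 : ∀ a : Fin n2, φ2 a = ((Real.sqrt n2 : ℂ))⁻¹ • ∑ b : Fin n2,
      (Complex.exp (2 * Real.pi * Complex.I / n2)) ^ (-((a.1 * b.1 : ℕ) : ℤ)) • e2 b)
    (Z1 : H →ₗ[ℂ] H)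
    (hZ1 : Z1 = ∑ a : Fin n2, outer (e2 a) (φ1 ⟨a.1, lt_of_lt_of_le a.2 hle⟩)) :
    (Submodule.span ℂ
        ({φ1 ⟨0, h1⟩, (LinearMap.adjoint Z1) (φ2 ⟨0, h2⟩), e2 ⟨0, h2⟩, φ2 ⟨0, h2⟩}
          : Set H))ᗮ =
    Submodule.span ℂ
      ({v : H | ∃ a : ℕ, 1 ≤ a ∧ a ≤ n2 - 2 ∧ ∃ ha : a + 1 < n1,
          v = φ1 ⟨a, Nat.lt_of_succ_lt ha⟩ - φ1 ⟨a + 1, ha⟩} ∪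
       {v : H | ∃ a : ℕ, 1 ≤ a ∧ a ≤ n2 - 2 ∧ ∃ ha : a + 1 < n2,
          v = φ2 ⟨a, Nat.lt_of_succ_lt ha⟩ - φ2 ⟨a + 1, ha⟩} ∪
       {v : H | ∃ a : ℕ, n2 ≤ a ∧ ∃ ha : a < n1, v = φ1 ⟨a, ha⟩}) := by
  classical
  -- orthonormality of the two pieces
  have he1 : Orthonormal ℂ e1 := by
    have := honb.comp Sum.inl Sum.inl_injective
    rwa [Sum.elim_comp_inl] at this
  have he2 : Orthonormal ℂ e2 := by
    have := honb.comp Sum.inr Sum.inr_injective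
    rwa [Sum.elim_comp_inr] at this
  have hcr : ∀ (b : Fin n1) (c : Fin n2), ⟪e1 b, e2 c⟫ = 0 := by
    intro b c
    have := orthonormal_iff_ite.mp honb (Sum.inl b) (Sum.inr c)
    simpa using this
  have hcr' : ∀ (c : Fin n2) (b : Fin n1), ⟪e2 c, e1 b⟫ = 0 := by
    intro c b
    have := orthonormal_iff_ite.mp honb (Sum.inr c) (Sum.inl b)
    simpa using this
  have hip1 : ∀ a a' : Fin n1, ⟪φ1 a, φ1 a'⟫ = if a = a' then (1:ℂ) else 0 :=
    fourier_inner' h1 e1 he1 φ1 hφ1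
  have hip2 : ∀ a a' : Fin n2, ⟪φ2 a, φ2 a'⟫ = if a = a' then (1:ℂ) else 0 :=
    fourier_inner' h2 e2 he2 φ2 hφ2
  have he2φ2 : ∀ c a : Fin n2, ⟪e2 c, φ2 a⟫ = ((Real.sqrt n2 : ℂ))⁻¹ *
      (Complex.exp (2 * Real.pi * Complex.I / n2)) ^ (-((a.1 * c.1 : ℕ) : ℤ)) :=
    fun c a => fourier_inner_e' e2 he2 φ2 hφ2 c a
  have he2φ1 : ∀ (c : Fin n2) (a : Fin n1), ⟪e2 c, φ1 a⟫ = 0 := by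
    intro c a
    rw [hφ1 a, inner_smul_right, inner_sum]
    simp [inner_smul_right, hcr']
  have h12 : ∀ (a : Fin n1) (b : Fin n2), ⟪φ1 a, φ2 b⟫ = 0 := by
    intro a b
    rw [hφ1 a, hφ2 b, inner_smul_right, inner_smul_left, sum_inner]
    simp [inner_sum, inner_smul_left, inner_smul_right, hcr]
  have h21 : ∀ (b : Fin n2) (a : Fin n1), ⟪φ2 b, φ1 a⟫ = 0 := by
    intro b a
    rw [hφ2 b, hφ1 a, inner_smul_right, inner_smul_left, sum_inner]
    simp [inner_sum, inner_smul_left, inner_smul_right, hcr']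
  -- the adjoint of Z1 on φ2 0
  have hZadj : (LinearMap.adjoint Z1) (φ2 ⟨0, h2⟩)
      = ((Real.sqrt n2 : ℂ))⁻¹ • ∑ a : Fin n2, φ1 ⟨a.1, lt_of_lt_of_le a.2 hle⟩ := by
    rw [hZ1, map_sum, LinearMap.sum_apply]
    simp_rw [adjoint_outer', outer_apply']
    have hval : ∀ a : Fin n2, ⟪e2 a, φ2 ⟨0, h2⟩⟫ = ((Real.sqrt n2 : ℂ))⁻¹ := by
      intro a
      rw [he2φ2]
      norm_num
    simp_rw [hval]
    rw [← Finset.smul_sum]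
  -- the sum of inner products of φ1 over the first n2 indices
  have hsum1 : ∀ a : Fin n1,
      (∑ j : Fin n2, ⟪φ1 ⟨j.1, lt_of_lt_of_le j.2 hle⟩, φ1 a⟫)
        = if a.1 < n2 then (1:ℂ) else 0 := by
    intro a
    simp_rw [hip1]
    by_cases h : a.1 < n2
    · rw [if_pos h]
      rw [Finset.sum_eq_single (⟨a.1, h⟩ : Fin n2)]
      · rw [if_pos (Fin.ext rfl)]
      · intro b _ hb
        rw [if_neg]
        intro hEq
        have hv : (b.1 : ℕ) = a.1 := congrArg Fin.val hEq
        exact hb (Fin.ext hv)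
      · intro hmem
        exact absurd (Finset.mem_univ _) hmem
    · rw [if_neg h]
      apply Finset.sum_eq_zero
      intro j _
      rw [if_neg]
      intro hEq
      have hv : (j.1 : ℕ) = a.1 := congrArg Fin.val hEq
      have hj := j.2
      omega
  set Gset : Set H :=
      ({v : H | ∃ a : ℕ, 1 ≤ a ∧ a ≤ n2 - 2 ∧ ∃ ha : a + 1 < n1,
          v = φ1 ⟨a, Nat.lt_of_succ_lt ha⟩ - φ1 ⟨a + 1, ha⟩} ∪
       {v : H | ∃ a : ℕ, 1 ≤ a ∧ a ≤ n2 - 2 ∧ ∃ ha : a + 1 < n2,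
          v = φ2 ⟨a, Nat.lt_of_succ_lt ha⟩ - φ2 ⟨a + 1, ha⟩} ∪
       {v : H | ∃ a : ℕ, n2 ≤ a ∧ ∃ ha : a < n1, v = φ1 ⟨a, ha⟩}) with hGset
  set Kset : Set H :=
      ({φ1 ⟨0, h1⟩, (LinearMap.adjoint Z1) (φ2 ⟨0, h2⟩), e2 ⟨0, h2⟩, φ2 ⟨0, h2⟩} : Set H)
    with hKset
  set K := Submodule.span ℂ Kset with hKdef
  set S := Submodule.span ℂ Gset with hSdef
  -- all generators of S are orthogonal to all generators of K
  have hog : ∀ u ∈ Kset, ∀ v ∈ Gset, ⟪u, v⟫ = 0 := by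
    intro u hu v hv
    rcases hv with (hv | hv) | hv
    · -- v = φ1 a - φ1 (a+1)
      obtain ⟨a, ha1, ha2, ha, rfl⟩ := hv
      have haa : a < n2 := by omega
      have haa1 : a + 1 < n2 := by omega
      rcases hu with rfl | rfl | rfl | rfl
      · rw [inner_sub_right, hip1, hip1,
          if_neg (by simp only [Fin.mk.injEq]; omega),
          if_neg (by simp only [Fin.mk.injEq]; omega)]
        simp
      · rw [hZadj, inner_smul_left, inner_sub_right, sum_inner, sum_inner,
          hsum1 _, hsum1 _, if_pos haa, if_pos haa1, sub_self, mul_zero]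
      · rw [inner_sub_right, he2φ1, he2φ1]; simp
      · rw [inner_sub_right, h21, h21]; simp
    · -- v = φ2 a - φ2 (a+1)
      obtain ⟨a, ha1, ha2, ha, rfl⟩ := hv
      rcases hu with rfl | rfl | rfl | rfl
      · rw [inner_sub_right, h12, h12]; simp
      · rw [hZadj, inner_smul_left, inner_sub_right, sum_inner, sum_inner]
        simp [h12]
      · rw [inner_sub_right, he2φ2, he2φ2]
        norm_num
      · rw [inner_sub_right, hip2, hip2,
          if_neg (by simp only [Fin.mk.injEq]; omega),
          if_neg (by simp only [Fin.mk.injEq]; omega)]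
        simp
    · -- v = φ1 a, n2 ≤ a
      obtain ⟨a, ha1, ha, rfl⟩ := hv
      rcases hu with rfl | rfl | rfl | rfl
      · rw [hip1, if_neg (by simp only [Fin.mk.injEq]; omega)]
      · rw [hZadj, inner_smul_left, sum_inner, hsum1 _,
          if_neg (by simp only [Fin.val_mk]; omega), mul_zero]
      · exact he2φ1 _ _
      · exact h21 _ _
  -- S ≤ Kᗮ
  have hSK : S ≤ Kᗮ := by
    rw [hSdef, Submodule.span_le]
    intro v hv
    rw [SetLike.mem_coe, Submodule.mem_orthogonal]
    intro u hu
    refine Submodule.span_induction (p := fun u _ => ⟪u, v⟫ = 0)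
      (fun x hx => hog x hx v hv) (by simp) ?_ ?_ hu
    · intro x y _ _ hx hy
      rw [inner_add_left, hx, hy, add_zero]
    · intro c x _ hx
      rw [inner_smul_left, hx, mul_zero]
  -- K ⊔ S = ⊤
  have hmemK : ∀ x ∈ Kset, x ∈ K ⊔ S := fun x hx =>
    Submodule.mem_sup_left (Submodule.subset_span hx)
  have hmemS : ∀ x ∈ Gset, x ∈ K ⊔ S := fun x hx =>
    Submodule.mem_sup_right (Submodule.subset_span hx)
  set J := K ⊔ S with hJdef
  have hu1 : φ1 ⟨0, h1⟩ ∈ J := hmemK _ (Or.inl rfl)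
  have hu2 : (LinearMap.adjoint Z1) (φ2 ⟨0, h2⟩) ∈ J := hmemK _ (Or.inr (Or.inl rfl))
  have hu3 : e2 ⟨0, h2⟩ ∈ J := hmemK _ (Or.inr (Or.inr (Or.inl rfl)))
  have hu4 : φ2 ⟨0, h2⟩ ∈ J := hmemK _ (Or.inr (Or.inr (Or.inr rfl)))
  have hT1 : (∑ a : Fin n2, φ1 ⟨a.1, lt_of_lt_of_le a.2 hle⟩) ∈ J := by
    have := J.smul_mem ((Real.sqrt n2 : ℝ) : ℂ) hu2
    rwa [hZadj, smul_smul, mul_inv_cancel₀ (sqrt_ne_zero_complex' h2), one_smul] at this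
  have hT2 : (∑ a : Fin n2, φ2 a) ∈ J := by
    have hinv := fourier_inv' h2 e2 he2 φ2 hφ2 ⟨0, h2⟩
    have heq : (∑ a : Fin n2, φ2 a)
        = ((Real.sqrt n2 : ℝ) : ℂ) • e2 ⟨0, h2⟩ := by
      rw [hinv, smul_smul, mul_inv_cancel₀ (sqrt_ne_zero_complex' h2), one_smul]
      refine (Finset.sum_congr rfl fun a _ => ?_)
      norm_num
    rw [heq]
    exact J.smul_mem _ hu3
  -- φ2 membership
  have hφ2J : ∀ b : Fin n2, φ2 b ∈ J := by
    set ψ : ℕ → H := fun b => if h : b < n2 then φ2 ⟨b, h⟩ else 0 with hψ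
    have key : ∀ b, b < n2 → ψ b ∈ J := by
      apply ladder' J ψ n2 hn2
      · show (if h : 0 < n2 then φ2 ⟨0, h⟩ else 0) ∈ J
        rw [dif_pos h2]; exact hu4
      · have : ∑ b ∈ Finset.range n2, ψ b = ∑ a : Fin n2, φ2 a := by
          rw [← Fin.sum_univ_eq_sum_range]
          refine Finset.sum_congr rfl fun a _ => ?_
          simp [hψ, a.2]
        rw [this]; exact hT2
      · intro a ha1 ha2
        have ha : a + 1 < n2 := by omega
        have : ψ a - ψ (a + 1) = φ2 ⟨a, Nat.lt_of_succ_lt ha⟩ - φ2 ⟨a + 1, ha⟩ := by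
          simp [hψ, Nat.lt_of_succ_lt ha, ha]
        rw [this]
        exact hmemS _ (Or.inl (Or.inr ⟨a, ha1, ha2, ha, rfl⟩))
    intro b
    have := key b.1 b.2
    simpa [hψ, b.2] using this
  -- φ1 membership
  have hφ1J : ∀ b : Fin n1, φ1 b ∈ J := by
    set ψ : ℕ → H := fun b => if h : b < n1 then φ1 ⟨b, h⟩ else 0 with hψ
    have key : ∀ b, b < n2 → ψ b ∈ J := by
      apply ladder' J ψ n2 hn2
      · show (if h : 0 < n1 then φ1 ⟨0, h⟩ else 0) ∈ J
        rw [dif_pos h1]; exact hu1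
      · have : ∑ b ∈ Finset.range n2, ψ b
            = ∑ a : Fin n2, φ1 ⟨a.1, lt_of_lt_of_le a.2 hle⟩ := by
          rw [← Fin.sum_univ_eq_sum_range]
          refine Finset.sum_congr rfl fun a _ => ?_
          simp [hψ, lt_of_lt_of_le a.2 hle]
        rw [this]; exact hT1
      · intro a ha1 ha2
        have ha : a + 1 < n1 := by omega
        have : ψ a - ψ (a + 1) = φ1 ⟨a, Nat.lt_of_succ_lt ha⟩ - φ1 ⟨a + 1, ha⟩ := by
          simp [hψ, Nat.lt_of_succ_lt ha, ha]
        rw [this]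
        exact hmemS _ (Or.inl (Or.inl ⟨a, ha1, ha2, ha, rfl⟩))
    intro b
    rcases Nat.lt_or_ge b.1 n2 with hb | hb
    · have := key b.1 hb
      simpa [hψ, b.2] using this
    · exact hmemS _ (Or.inr ⟨b.1, hb, b.2, by rw [Fin.eta]⟩)
  -- e1, e2 membership, hence J = ⊤
  have hJtop : J = ⊤ := by
    rw [eq_top_iff, ← hspan, Submodule.span_le]
    rintro x ⟨i, rfl⟩
    rcases i with b | b
    · have hinv := fourier_inv' h1 e1 he1 φ1 hφ1 b
      rw [Sum.elim_inl, hinv]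
      exact J.smul_mem _ (J.sum_mem fun a _ => J.smul_mem _ (hφ1J a))
    · have hinv := fourier_inv' h2 e2 he2 φ2 hφ2 b
      rw [Sum.elim_inr, hinv]
      exact J.smul_mem _ (J.sum_mem fun a _ => J.smul_mem _ (hφ2J a))
  -- conclusion
  refine le_antisymm ?_ hSK
  intro x hx
  have hxJ : x ∈ K ⊔ S := by rw [← hJdef, hJtop]; trivial
  obtain ⟨k, hk, s, hs, rfl⟩ := Submodule.mem_sup.1 hxJ
  have hsKperp : s ∈ Kᗮ := hSK hs
  have hkKperp : k ∈ Kᗮ := by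
    have := Kᗮ.sub_mem hx hsKperp
    simpa using this
  have hk0 : k = 0 := by
    have hdis := (Submodule.orthogonal_disjoint K).le_bot
      (Submodule.mem_inf.2 ⟨hk, hkKperp⟩)
    simpa using hdis
  rw [hk0, zero_add]
  exact hs
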